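/- Let Ω ⊂ ℝ^d be a bounded, connected open set with Lipschitz boundary. Then there exist γ > 0 and C_γ > 0 such that for every ε ∈ [0,γ), the ε-interior Ω_ε is an open set with Lipschitz boundary whose Lipschitz constant is at most C_γ. -/

import Mathlib

open MeasureTheory Filter Set
open scoped ENNReal InnerProductSpace BigOperators Topology

noncomputable section

abbrev Euc (d : ℕ) : Type := EuclideanSpace ℝ (Fin d)

/-- The ε-interior of a set. -/
def epsInterior {d : ℕ} (A : Set (Euc d)) (ε : ℝ) : Set (Euc d) :=
  {x ∈ A | ε < Metric.infDist x Aᶜ}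

/-- `O` has a Lipschitz boundary, with Lipschitz constant at most `L`:
near each boundary point, in suitable orthonormal coordinates, `O` is the open epigraph of an
`L`-Lipschitz function. -/
def HasLipschitzBoundaryWith {d : ℕ} (L : ℝ) (O : Set (Euc d)) : Prop :=
  ∀ x ∈ frontier O, ∃ r > (0:ℝ), ∃ v : Euc d, ‖v‖ = 1 ∧
    ∃ φ : Euc d → ℝ, LipschitzWith (Real.toNNReal L) φ ∧
      ∀ y ∈ Metric.ball x r, (y ∈ O ↔ φ (y - ⟪y, v⟫_ℝ • v) < ⟪y, v⟫_ℝ)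

/-- `O` has a Lipschitz boundary. -/
def HasLipschitzBoundary {d : ℕ} (O : Set (Euc d)) : Prop :=
  ∃ L : ℝ, HasLipschitzBoundaryWith L O

/-- Relative compactness of a sequence of functions in `L^p(μ)` : every subsequence admits a
sub-subsequence converging in the `L^p(μ)` (pseudo-)norm. -/
def RelCompL {X E : Type*} [MeasurableSpace X] [NormedAddCommGroup E]
    (p : ℝ≥0∞) (μ : Measure X) (f : ℕ → X → E) : Prop :=
  ∀ φ : ℕ → ℕ, StrictMono φ → ∃ ψ : ℕ → ℕ, StrictMono ψ ∧ ∃ g : X → E,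
    Tendsto (fun k => eLpNorm (f (φ (ψ k)) - g) p μ) atTop (𝓝 0)

/-- The `H^m(Ω)` norm of a function of the space variable. -/
def sliceHmNorm {d : ℕ} (m : ℕ) (Ω : Set (Euc d)) (w : Euc d → ℝ) : ℝ :=
  ∑ k ∈ Finset.range (m + 1), Real.sqrt (∫ x in Ω, ‖iteratedFDeriv ℝ k w x‖ ^ 2)

/-- `(∂ₜ f)` is bounded by `C` in `𝓜(I; H^{-m}(Ω))` (dual of `C⁰(I; H^m(Ω))`),
in the distributional sense: for every smooth test function `ψ` compactly supported in
`(t0,t1) × Ω`, the pairing `⟨∂ₜ f, ψ⟩ = -∫ f ∂ₜψ` is bounded by `C sup_{t ∈ I} ‖ψ(t)‖_{H^m(Ω)}`. -/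
def TimeDerivBddInMHm {d : ℕ} (t0 t1 : ℝ) (Ω : Set (Euc d)) (m : ℕ) (C : ℝ)
    (f : ℝ × Euc d → ℝ) : Prop :=
  ∀ ψ : ℝ × Euc d → ℝ, ContDiff ℝ (⊤ : ℕ∞) ψ → HasCompactSupport ψ →
    tsupport ψ ⊆ Set.Ioo t0 t1 ×ˢ Ω →
    |∫ z in Set.Icc t0 t1 ×ˢ Ω, f z * fderiv ℝ ψ z ((1:ℝ), (0 : Euc d))| ≤
      C * ⨆ t ∈ Set.Icc t0 t1, sliceHmNorm m Ω (fun x => ψ (t, x))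

/-- Weak spatial gradient of `f` on an open time-space set `O`. -/
def HasWeakGradXOn {d : ℕ} (O : Set (ℝ × Euc d)) (f : ℝ × Euc d → ℝ)
    (g : ℝ × Euc d → Euc d) : Prop :=
  ∀ ψ : ℝ × Euc d → ℝ, ContDiff ℝ (⊤ : ℕ∞) ψ → HasCompactSupport ψ → tsupport ψ ⊆ O →
    ∀ i : Fin d, ∫ z, f z * fderiv ℝ ψ z ((0:ℝ), EuclideanSpace.single i (1:ℝ)) =
      - ∫ z, g z i * ψ z

/-- Weak gradient of `v` on an open subset `O` of `ℝ^d`. -/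
def HasWeakGradOn {d : ℕ} (O : Set (Euc d)) (v : Euc d → ℝ) (g : Euc d → Euc d) : Prop :=
  ∀ φ : Euc d → ℝ, ContDiff ℝ (⊤ : ℕ∞) φ → HasCompactSupport φ → tsupport φ ⊆ O →
    ∀ i : Fin d, ∫ x, v x * fderiv ℝ φ x (EuclideanSpace.single i (1:ℝ)) = - ∫ x, g x i * φ x

/-- `L^q` norm in time over `I` of an `ℝ≥0∞`-valued function. -/
def timeLq (q : ℝ≥0∞) (I : Set ℝ) (F : ℝ → ℝ≥0∞) : ℝ≥0∞ :=
  if q = ∞ then essSup F (volume.restrict I)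
  else (∫⁻ t in I, F t ^ q.toReal) ^ (1 / q.toReal)


open Metric
open scoped NNReal

lemma isOpen_epsInterior {d : ℕ} {Ω : Set (Euc d)} (h : IsOpen Ω) (ε : ℝ) :
    IsOpen (epsInterior Ω ε) := by
  have : epsInterior Ω ε = Ω ∩ (fun x => Metric.infDist x Ωᶜ) ⁻¹' Set.Ioi ε := rfl
  rw [this]
  exact h.inter (isOpen_Ioi.preimage (Metric.continuous_infDist_pt _))

lemma mem_epsInterior_iff {d : ℕ} {Ω : Set (Euc d)} (hΩopen : IsOpen Ω)
    (hne : Ωᶜ.Nonempty) {ε : ℝ} (hε : 0 ≤ ε) (x : Euc d) :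
    x ∈ epsInterior Ω ε ↔ ∀ u : Euc d, ‖u‖ ≤ ε → x + u ∈ Ω := by
  constructor
  · rintro ⟨hx, hd⟩ u hu
    by_contra h
    have h1 : Metric.infDist x Ωᶜ ≤ ‖u‖ := by
      have := Metric.infDist_le_dist_of_mem (x := x) (show x + u ∈ Ωᶜ from h)
      simpa [dist_eq_norm] using this
    linarith
  · intro h
    have hxΩ : x ∈ Ω := by simpa using h 0 (by simpa using hε)
    refine ⟨hxΩ, ?_⟩
    obtain ⟨c, hc, hceq⟩ := (isClosed_compl_iff.mpr hΩopen).exists_infDist_eq_dist hne x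
    rw [hceq]
    by_contra hle
    push_neg at hle
    have : x + (c - x) ∈ Ω := h _ (by rwa [norm_sub_rev, ← dist_eq_norm])
    simp only [add_sub_cancel] at this
    exact hc this

lemma frontier_epsInterior_close {d : ℕ} {Ω : Set (Euc d)} (hΩopen : IsOpen Ω)
    (hne : Ωᶜ.Nonempty) {ε : ℝ} (hε : 0 ≤ ε) {x : Euc d}
    (hx : x ∈ frontier (epsInterior Ω ε)) :
    ∃ q ∈ frontier Ω, dist x q ≤ ε := by
  have hop := isOpen_epsInterior hΩopen ε
  rw [hop.frontier_eq] at hx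
  obtain ⟨hxc, hxn⟩ := hx
  have hxΩ : x ∈ closure Ω := closure_mono (fun y hy => hy.1) hxc
  have hinf : Metric.infDist x Ωᶜ ≤ ε := by
    by_contra hgt
    push_neg at hgt
    have hxint : x ∈ Ω := by
      have h2 : x ∉ closure Ωᶜ := by
        intro hmem
        rw [← Metric.infDist_closure] at hgt
        have := Metric.infDist_zero_of_mem hmem
        rw [this] at hgt
        linarith
      rw [closure_compl] at h2
      exact interior_subset (not_not.mp (by simpa using h2))
    exact hxn ⟨hxint, hgt⟩
  by_cases hxin : x ∈ Ω
  · obtain ⟨q, hq, hqd⟩ :=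
      exists_mem_frontier_infDist_compl_eq_dist hxin (Set.nonempty_compl.mp hne)
    exact ⟨q, hq, by rw [← hqd]; exact hinf⟩
  · refine ⟨x, ?_, by simpa using hε⟩
    rw [frontier_eq_closure_inter_closure]
    exact ⟨hxΩ, subset_closure hxin⟩

def supFun {d : ℕ} (v : Euc d) (φ : Euc d → ℝ) (ε : ℝ) (z : Euc d) : ℝ :=
  sSup ((fun u => φ (z + (u - ⟪u, v⟫_ℝ • v)) - ⟪u, v⟫_ℝ) '' Metric.closedBall 0 ε)

section supFun

variable {d : ℕ} {v : Euc d} {φ : Euc d → ℝ} {ε : ℝ} {K : ℝ≥0}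

lemma supFun_isCompact (hφ : LipschitzWith K φ) (z : Euc d) :
    IsCompact ((fun u : Euc d => φ (z + (u - ⟪u, v⟫_ℝ • v)) - ⟪u, v⟫_ℝ) ''
      Metric.closedBall 0 ε) := by
  apply (isCompact_closedBall _ _).image
  have hc := hφ.continuous
  fun_prop

lemma supFun_nonempty (hε : 0 ≤ ε) (z : Euc d) :
    ((fun u : Euc d => φ (z + (u - ⟪u, v⟫_ℝ • v)) - ⟪u, v⟫_ℝ) ''
      Metric.closedBall 0 ε).Nonempty :=
  ⟨_, ⟨0, by simpa using hε, rfl⟩⟩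

lemma supFun_lt_iff (hφ : LipschitzWith K φ) (hε : 0 ≤ ε) (z : Euc d) (t : ℝ) :
    supFun v φ ε z < t ↔ ∀ u ∈ Metric.closedBall (0:Euc d) ε,
      φ (z + (u - ⟪u, v⟫_ℝ • v)) - ⟪u, v⟫_ℝ < t := by
  constructor
  · intro hs u hu
    exact lt_of_le_of_lt (le_csSup (supFun_isCompact hφ z).bddAbove ⟨u, hu, rfl⟩) hs
  · intro h
    obtain ⟨u, hu, heq⟩ := (supFun_isCompact hφ z).sSup_mem (supFun_nonempty hε z)
    rw [supFun, ← heq]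
    exact h u hu

lemma supFun_lipschitz (hφ : LipschitzWith K φ) (hε : 0 ≤ ε) :
    LipschitzWith K (supFun v φ ε) := by
  apply LipschitzWith.of_dist_le_mul
  have key : ∀ w w' : Euc d, supFun v φ ε w ≤ supFun v φ ε w' + K * dist w w' := by
    intro w w'
    apply csSup_le (supFun_nonempty hε w)
    rintro b ⟨u, hu, rfl⟩
    have h1 : φ (w + (u - ⟪u, v⟫_ℝ • v)) ≤ φ (w' + (u - ⟪u, v⟫_ℝ • v)) + K * dist w w' := by
      have h2 := hφ.dist_le_mul (w + (u - ⟪u, v⟫_ℝ • v)) (w' + (u - ⟪u, v⟫_ℝ • v))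
      rw [dist_add_right, Real.dist_eq] at h2
      linarith [le_abs_self (φ (w + (u - ⟪u, v⟫_ℝ • v)) - φ (w' + (u - ⟪u, v⟫_ℝ • v)))]
    have h3 : φ (w' + (u - ⟪u, v⟫_ℝ • v)) - ⟪u, v⟫_ℝ ≤ supFun v φ ε w' :=
      le_csSup (supFun_isCompact hφ w').bddAbove ⟨u, hu, rfl⟩
    simp only
    linarith
  intro z z'
  rw [Real.dist_eq, abs_sub_le_iff]
  constructor
  · linarith [key z z']
  · have := key z' z
    rw [dist_comm z' z] at this
    linarith

end supFun

lemma chart_epsInterior {d : ℕ} {Ω : Set (Euc d)} (hΩopen : IsOpen Ω) (hne : Ωᶜ.Nonempty)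
    {ε : ℝ} (hε : 0 ≤ ε) {p : Euc d} {r : ℝ} {v : Euc d} {φ : Euc d → ℝ}
    {K : ℝ≥0} (hφ : LipschitzWith K φ)
    (hchart : ∀ y ∈ Metric.ball p r, (y ∈ Ω ↔ φ (y - ⟪y, v⟫_ℝ • v) < ⟪y, v⟫_ℝ))
    (hεr : ε < r / 8) {x : Euc d} (hx : dist x p < r / 4) :
    ∀ y ∈ Metric.ball x (r / 4),
      (y ∈ epsInterior Ω ε ↔ supFun v φ ε (y - ⟪y, v⟫_ℝ • v) < ⟪y, v⟫_ℝ) := by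
  intro y hy
  rw [Metric.mem_ball] at hy
  rw [mem_epsInterior_iff hΩopen hne hε, supFun_lt_iff hφ hε]
  have hyball : ∀ u : Euc d, ‖u‖ ≤ ε → y + u ∈ Metric.ball p r := by
    intro u hu
    have h1 : dist (y + u) p ≤ dist (y + u) y + dist y x + dist x p := dist_triangle4 _ _ _ _
    have h2 : dist (y + u) y = ‖u‖ := by rw [dist_eq_norm]; simp
    rw [Metric.mem_ball]
    linarith
  have key : ∀ u : Euc d, ‖u‖ ≤ ε →
      ((y + u ∈ Ω) ↔ φ ((y - ⟪y, v⟫_ℝ • v) + (u - ⟪u, v⟫_ℝ • v)) - ⟪u, v⟫_ℝ < ⟪y, v⟫_ℝ) := by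
    intro u hu
    rw [hchart (y + u) (hyball u hu)]
    have e1 : ⟪y + u, v⟫_ℝ = ⟪y, v⟫_ℝ + ⟪u, v⟫_ℝ := inner_add_left _ _ _
    have e2 : (y + u) - ⟪y + u, v⟫_ℝ • v = (y - ⟪y, v⟫_ℝ • v) + (u - ⟪u, v⟫_ℝ • v) := by
      rw [e1, add_smul]; abel
    rw [e2, e1]
    constructor <;> intro h <;> linarith
  constructor
  · intro h u hu
    rw [mem_closedBall_zero_iff] at hu
    exact (key u hu).mp (h u hu)
  · intro h u hu
    exact (key u hu).mpr (h u (mem_closedBall_zero_iff.mpr hu))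

theorem eps_interior_uniformly_lipschitz'
    {d : ℕ} (Ω : Set (Euc d)) (hΩopen : IsOpen Ω) (hΩbdd : Bornology.IsBounded Ω)
    (hΩconn : IsConnected Ω)
    (hΩlip : ∃ L : ℝ, ∀ x ∈ frontier Ω, ∃ r > (0:ℝ), ∃ v : Euc d, ‖v‖ = 1 ∧
      ∃ φ : Euc d → ℝ, LipschitzWith (Real.toNNReal L) φ ∧
        ∀ y ∈ Metric.ball x r, (y ∈ Ω ↔ φ (y - ⟪y, v⟫_ℝ • v) < ⟪y, v⟫_ℝ)) :
    ∃ γ > (0:ℝ), ∃ Cγ > (0:ℝ), ∀ ε ∈ Set.Ico (0:ℝ) γ,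
      IsOpen (epsInterior Ω ε) ∧ (∀ x ∈ frontier (epsInterior Ω ε), ∃ r > (0:ℝ),
        ∃ v : Euc d, ‖v‖ = 1 ∧ ∃ φ : Euc d → ℝ, LipschitzWith (Real.toNNReal Cγ) φ ∧
          ∀ y ∈ Metric.ball x r,
            (y ∈ epsInterior Ω ε ↔ φ (y - ⟪y, v⟫_ℝ • v) < ⟪y, v⟫_ℝ)) := by
  by_cases hne : Ωᶜ.Nonempty
  case neg =>
    refine ⟨1, one_pos, 1, one_pos, fun ε hε => ?_⟩
    have hΩc : Ωᶜ = ∅ := not_nonempty_iff_eq_empty.mp hne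
    have hempty : epsInterior Ω ε = ∅ := by
      ext x
      simp only [epsInterior, Set.mem_sep_iff, hΩc, Metric.infDist_empty,
        Set.mem_empty_iff_false, iff_false, not_and]
      intro _
      linarith [hε.1]
    rw [hempty]
    exact ⟨isOpen_empty, fun x hx => absurd hx (by simp)⟩
  case pos =>
  obtain ⟨L, hL⟩ := hΩlip
  have hFc : IsCompact (frontier Ω) :=
    Metric.isCompact_of_isClosed_isBounded isClosed_frontier
      (hΩbdd.closure.subset frontier_subset_closure)
  choose r hr v hv φ hφ hchart using fun p : frontier Ω => hL p p.2
  obtain ⟨S, hS⟩ := hFc.elim_finite_subcover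
    (fun p : frontier Ω => Metric.ball (p : Euc d) (r p / 8))
    (fun p => Metric.isOpen_ball)
    (fun q hq => Set.mem_iUnion.mpr ⟨⟨q, hq⟩, Metric.mem_ball_self (by linarith [hr ⟨q, hq⟩])⟩)
  by_cases hSne : S.Nonempty
  case neg =>
    exfalso
    have hFe : frontier Ω = ∅ := by
      rw [Set.eq_empty_iff_forall_notMem]
      intro q hq
      have h1 := hS hq
      rw [Finset.not_nonempty_iff_eq_empty.mp hSne] at h1
      simp at h1
    have hclopen : IsClopen Ω := isClopen_iff_frontier_eq_empty.mpr hFe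
    have : Ω = Set.univ := hclopen.eq_univ hΩconn.nonempty
    rw [this] at hne
    simp at hne
  case pos =>
  set γ := S.inf' hSne (fun p => r p / 8) with hγdef
  have hγ : 0 < γ := by
    rw [hγdef, Finset.lt_inf'_iff]
    intro p _
    linarith [hr p]
  refine ⟨γ, hγ, max L 1, lt_max_iff.mpr (Or.inr one_pos), fun ε hε => ?_⟩
  obtain ⟨hε0, hεγ⟩ := hε
  refine ⟨isOpen_epsInterior hΩopen ε, ?_⟩
  intro x hx
  obtain ⟨q, hq, hdq⟩ := frontier_epsInterior_close hΩopen hne hε0 hx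
  obtain ⟨p, hpS, hqp⟩ : ∃ p ∈ S, q ∈ Metric.ball (p : Euc d) (r p / 8) := by
    have h1 := hS hq
    simpa using h1
  have hεp : ε < r p / 8 := lt_of_lt_of_le hεγ (Finset.inf'_le _ hpS)
  have hxp : dist x (p : Euc d) < r p / 4 := by
    have h1 := dist_triangle x q (p : Euc d)
    rw [Metric.mem_ball] at hqp
    linarith
  refine ⟨r p / 4, by linarith [hr p], v p, hv p, supFun (v p) (φ p) ε, ?_, ?_⟩
  · exact (supFun_lipschitz (hφ p) hε0).weaken (Real.toNNReal_mono (le_max_left L 1))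
  · exact chart_epsInterior hΩopen hne hε0 (hφ p) (hchart p) hεp hxp


/-- **Uniform Lipschitz regularity of the ε-interiors.**  If `Ω ⊂ ℝ^d` is a bounded,
connected open set with Lipschitz boundary, then there exist `γ > 0` and `C_γ > 0` such
that for every `ε ∈ [0,γ)`, the ε-interior `Ω_ε` is an open set with Lipschitz boundary
of Lipschitz constant at most `C_γ`. -/
theorem eps_interior_uniformly_lipschitz
    {d : ℕ} (Ω : Set (Euc d)) (hΩopen : IsOpen Ω) (hΩbdd : Bornology.IsBounded Ω)
    (hΩconn : IsConnected Ω) (hΩlip : HasLipschitzBoundary Ω) :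
    ∃ γ > (0:ℝ), ∃ Cγ > (0:ℝ), ∀ ε ∈ Set.Ico (0:ℝ) γ,
      IsOpen (epsInterior Ω ε) ∧ HasLipschitzBoundaryWith Cγ (epsInterior Ω ε) := by
  
  obtain ⟨γ, hγ, Cγ, hCγ, h⟩ := eps_interior_uniformly_lipschitz' Ω hΩopen hΩbdd hΩconn hΩlip
  exact ⟨γ, hγ, Cγ, hCγ, h⟩
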